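/- Corollary (second part): For every index i : Fin n and every real ξ ≠ 0, let M⁽ⁱ⁾_ξ := Matrix.updateCol L i (fun k => L k i + ξ) be the matrix obtained from L by adding ξ•𝟙 to its i-th column. Then T_P equals the range of M⁽ⁱ⁾_ξ: for every x : Fin n → ℝ, x ∈ T_P if and only if there exists y : Fin n → ℝ with x = (M⁽ⁱ⁾_ξ).mulVec y. -/

import Mathlib

/-!
Passing to the limit in `P ^ (k + 1) = P ^ k * P` and `P ^ k *ᵥ 𝟙 = 𝟙` gives `Q * P = Q` and
`Q *ᵥ 𝟙 = 𝟙`, so `Q` kills the range of `L = 1 - P` and sends `M y = L y + ξ yᵢ 𝟙` to the constant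
`ξ yᵢ`. Conversely, `x - P ^ k *ᵥ x = L (∑_{j<k} P ^ j) x` lies in the range of `L`, which is
closed, so `x - Q x = L w` for some `w`. If `Q x = a 𝟙`, then `x = L w + a 𝟙`, and since `L 𝟙 = 0`
we may shift `w` by a constant until its `i`-th entry is `a / ξ`.
-/

open Filter Matrix Topology

namespace Matrix

variable {ι : Type*} [Fintype ι] [DecidableEq ι]

theorem updateCol_add_mulVec {m R : Type*} [CommSemiring R] (A : Matrix m ι R) (i : ι)
    (c : m → R) (y : ι → R) :
    updateCol A i (fun k => A k i + c k) *ᵥ y = A *ᵥ y + y i • c := by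
  ext k
  simp only [mulVec, dotProduct, Pi.add_apply, Pi.smul_apply, smul_eq_mul,
    ← Finset.add_sum_erase _ _ (Finset.mem_univ i), updateCol_self]
  rw [Finset.sum_congr rfl fun l hl => by rw [updateCol_ne (Finset.ne_of_mem_erase hl)]]
  ring

section Limit

variable {R : Type*} [Ring R] [TopologicalSpace R] [IsTopologicalRing R] [T2Space R]
  {P Q : Matrix ι ι R}

theorem mul_eq_of_tendsto_pow (h : Tendsto (P ^ ·) atTop (𝓝 Q)) : Q * P = Q :=
  tendsto_nhds_unique (h.mul_const P) <| by
    simpa only [Function.comp_def, pow_succ] using h.comp (tendsto_add_atTop_nat 1)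

theorem mulVec_eq_of_tendsto_pow (h : Tendsto (P ^ ·) atTop (𝓝 Q)) {v : ι → R}
    (hv : P *ᵥ v = v) : Q *ᵥ v = v := by
  have hpow (k : ℕ) : P ^ k *ᵥ v = v := by
    induction k with
    | zero => exact one_mulVec v
    | succ k ih => rw [pow_succ, ← mulVec_mulVec, hv, ih]
  refine tendsto_nhds_unique (((continuous_id.matrix_mulVec continuous_const).tendsto Q).comp h) ?_
  simpa only [Function.comp_def, id, hpow] using tendsto_const_nhds

end Limit

theorem sub_mulVec_mem_range_of_tendsto_pow {𝕜 : Type*} [NontriviallyNormedField 𝕜]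
    [CompleteSpace 𝕜] {P Q : Matrix ι ι 𝕜} (h : Tendsto (P ^ ·) atTop (𝓝 Q)) (v : ι → 𝕜) :
    v - Q *ᵥ v ∈ LinearMap.range (1 - P).mulVecLin := by
  have hmem (k : ℕ) : v - P ^ k *ᵥ v ∈ LinearMap.range (1 - P).mulVecLin :=
    ⟨(∑ j ∈ Finset.range k, P ^ j) *ᵥ v, by
      rw [mulVecLin_apply, mulVec_mulVec, mul_neg_geom_sum, sub_mulVec, one_mulVec]⟩
  have hlim : Tendsto (fun k => v - P ^ k *ᵥ v) atTop (𝓝 (v - Q *ᵥ v)) :=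
    tendsto_const_nhds.sub (((continuous_id.matrix_mulVec continuous_const).tendsto Q).comp h)
  exact (Submodule.closed_of_finiteDimensional _).mem_of_tendsto hlim (Eventually.of_forall hmem)

end Matrix

theorem region_of_convergence_eq_range_updateCol_add_xi_general
    (n : ℕ) (P Q : Matrix (Fin n) (Fin n) ℝ)
    (hProw : ∀ i, ∑ j, P i j = 1)
    (hconv : Tendsto (fun k => P ^ k) atTop (nhds Q))
    (i : Fin n) (ξ : ℝ) (hξ : ξ ≠ 0) :
    ∀ x : Fin n → ℝ,
      (∃ a : ℝ, ∀ j, Q.mulVec x j = a) ↔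
        ∃ y : Fin n → ℝ,
          x = (Matrix.updateCol (1 - P) i (fun k => (1 - P) k i + ξ)).mulVec y := by
  have hP1 : P *ᵥ 1 = 1 := funext fun k => by simp [mulVec, dotProduct, hProw]
  have hQ1 : Q *ᵥ 1 = 1 := mulVec_eq_of_tendsto_pow hconv hP1
  have hL1 : (1 - P) *ᵥ 1 = 0 := by rw [sub_mulVec, one_mulVec, hP1, sub_self]
  have hQL : Q * (1 - P) = 0 := by rw [mul_sub, mul_one, mul_eq_of_tendsto_pow hconv, sub_self]
  have hM (y : Fin n → ℝ) : updateCol (1 - P) i (fun k => (1 - P) k i + ξ) *ᵥ y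
      = (1 - P) *ᵥ y + (ξ * y i) • 1 := by
    rw [updateCol_add_mulVec (1 - P) i (fun _ => ξ)]
    congr 1
    ext
    simp [mul_comm]
  intro x
  simp only [hM]
  constructor
  · rintro ⟨a, ha⟩
    obtain ⟨w, hw⟩ := sub_mulVec_mem_range_of_tendsto_pow hconv x
    refine ⟨w + (a / ξ - w i) • 1, ?_⟩
    rw [mulVec_add, mulVec_smul, hL1, smul_zero, add_zero, ← mulVecLin_apply, hw]
    ext j
    simp [ha, field]
  · rintro ⟨y, rfl⟩
    exact ⟨ξ * y i, fun j => by simp [mulVec_add, mulVec_mulVec, hQL, mulVec_smul, hQ1]⟩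

/-- Corollary (second part): `T_P` is the range of the matrix obtained from
`L = 1 - P` by adding `ξ • 𝟙` (with `ξ ≠ 0`) to its `i`-th column. -/
theorem region_of_convergence_eq_range_updateCol_add_xi
    (n : ℕ) (hn : 0 < n) (P Q : Matrix (Fin n) (Fin n) ℝ)
    (hPnonneg : ∀ i j, 0 ≤ P i j) (hProw : ∀ i, ∑ j, P i j = 1)
    (hconv : Tendsto (fun k => P ^ k) atTop (nhds Q))
    (i : Fin n) (ξ : ℝ) (hξ : ξ ≠ 0) :
    ∀ x : Fin n → ℝ,
      (∃ a : ℝ, ∀ j, Q.mulVec x j = a) ↔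
        ∃ y : Fin n → ℝ,
          x = (Matrix.updateCol (1 - P) i (fun k => (1 - P) k i + ξ)).mulVec y :=
  region_of_convergence_eq_range_updateCol_add_xi_general n P Q hProw hconv i ξ hξ
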